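/- Let λ be a Young diagram and suppose λ ⋖ μ is obtained from λ by adding a box. Then |λ| · ∑_{ν : ν ⋖ λ} p↓(λ,ν) / (c(μ/λ) - c(λ/ν))² = 1/p↑(λ,μ) - 1, where the sum runs over Young diagrams ν obtained from λ by removing a box. -/
import Mathlib


open Finset

namespace YG

/-- `Covers μ l` : the Young diagram `l` is obtained from `μ` by adding one box. -/
def Covers (μ l : YoungDiagram) : Prop := μ ≤ l ∧ l.card = μ.card + 1

/-- The content `j - i` of a cell `(i, j)`. -/
def content (c : ℕ × ℕ) : ℤ := (c.2 : ℤ) - (c.1 : ℤ)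

/-- The content of the unique box of `l \ μ` when `Covers μ l`. -/
def addedContent (μ l : YoungDiagram) : ℤ := ∑ c ∈ l.cells \ μ.cells, content c

/-- The removable corner cells of a Young diagram; their contents are the local
maxima `y_i` of the profile. -/
def removableCells (l : YoungDiagram) : Finset (ℕ × ℕ) :=
  l.cells.filter (fun c => (c.1, c.2 + 1) ∉ l ∧ (c.1 + 1, c.2) ∉ l)

/-- The addable cells of a Young diagram; their contents are the local minima `x_i`
of the profile. -/
def addableCells (l : YoungDiagram) : Finset (ℕ × ℕ) :=
  ((Finset.range (l.card + 1)) ×ˢ (Finset.range (l.card + 1))).filter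
    (fun c => c ∉ l ∧ (c.1 = 0 ∨ (c.1 - 1, c.2) ∈ l) ∧ (c.2 = 0 ∨ (c.1, c.2 - 1) ∈ l))

/-- The transition probability `p↑(l, ·)` at an addable content `x = x_i`:
`∏_j (x_i - y_j) / ∏_{j ≠ i} (x_i - x_j)`. -/
noncomputable def pUpAt (l : YoungDiagram) (x : ℤ) : ℝ :=
  (∏ r ∈ removableCells l, ((x : ℝ) - (content r : ℝ))) /
    (∏ a ∈ (addableCells l).filter (fun a => content a ≠ x), ((x : ℝ) - (content a : ℝ)))

/-- The cotransition probability `p↓(l, ·)` at a removable content `y = y_i`: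
`-(1/|l|) ∏_j (y_i - x_j) / ∏_{j ≠ i} (y_i - y_j)`. -/
noncomputable def pDownAt (l : YoungDiagram) (y : ℤ) : ℝ :=
  -(1 / (l.card : ℝ)) *
    ((∏ a ∈ addableCells l, ((y : ℝ) - (content a : ℝ))) /
      (∏ r ∈ (removableCells l).filter (fun r => content r ≠ y), ((y : ℝ) - (content r : ℝ))))

/-- `p↑(μ, l)` for `μ ⋖ l`. -/
noncomputable def pUp (μ l : YoungDiagram) : ℝ := pUpAt μ (addedContent μ l)

/-- `p↓(l, μ)` for `μ ⋖ l`. -/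
noncomputable def pDown (l μ : YoungDiagram) : ℝ := pDownAt l (addedContent μ l)

/-- The Plancherel harmonic function
`f_Pl(l) = (1/|l|!) ∏_{(i,j) ∈ l} (l_i + l'_j - i - j + 1)` (hook products, written with
0-based indices). -/
noncomputable def fPl (l : YoungDiagram) : ℝ :=
  (∏ c ∈ l.cells, ((l.rowLen c.1 : ℝ) + (l.colLen c.2 : ℝ) - (c.1 : ℝ) - (c.2 : ℝ) - 1)) /
    (Nat.factorial l.card : ℝ)

end YG


section Aux
open Polynomial

lemma key (X Y : Finset ℝ) (x : ℝ) (hx : x ∈ X) (hcard : X.card = Y.card + 1)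
    (hxY : x ∉ Y) :
    ∑ y ∈ Y, ((∏ x' ∈ X, (y - x')) / (∏ y' ∈ Y.erase y, (y - y'))) / (x - y) ^ 2
      = 1 - (∏ x' ∈ X.erase x, (x - x')) / (∏ y ∈ Y, (x - y)) := by
  rcases Y.eq_empty_or_nonempty with rfl | hY
  · have hX : X = {x} := by
      apply Finset.eq_singleton_iff_unique_mem.mpr
      refine ⟨hx, fun b hb => ?_⟩
      by_contra hbx
      have h1 := Finset.one_lt_card_iff.mpr ⟨b, x, hb, hx, hbx⟩
      rw [hcard] at h1
      simp at h1
    simp [hX]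
  -- the polynomials
  set Q : Polynomial ℝ := ∏ y ∈ Y, (Polynomial.X - C y) with hQ
  set R : Polynomial ℝ := ∏ x' ∈ X.erase x, (Polynomial.X - C x') with hR
  have hQm : Q.Monic := monic_prod_of_monic _ _ (fun y _ => monic_X_sub_C y)
  have hRm : R.Monic := monic_prod_of_monic _ _ (fun y _ => monic_X_sub_C y)
  have hQd : Q.natDegree = Y.card := by
    rw [hQ, natDegree_prod_of_monic _ _ (fun y _ => monic_X_sub_C y)]
    simp
  have hRd : R.natDegree = Y.card := by
    rw [hR, natDegree_prod_of_monic _ _ (fun y _ => monic_X_sub_C y)]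
    simp [Finset.card_erase_of_mem hx, hcard]
  have hdeg : (Q - R).degree < (Y.card : ℕ) := by
    have := Polynomial.degree_sub_lt (p := Q) (q := R) ?_ hQm.ne_zero ?_
    · rw [Polynomial.degree_eq_natDegree hQm.ne_zero, hQd] at this
      exact_mod_cast this
    · rw [Polynomial.degree_eq_natDegree hQm.ne_zero, Polynomial.degree_eq_natDegree hRm.ne_zero, hQd, hRd]
    · rw [hQm.leadingCoeff, hRm.leadingCoeff]
  have hinj : Set.InjOn (id : ℝ → ℝ) Y := fun a _ b _ h => h
  have hinterp := Lagrange.eq_interpolate (f := Q - R) (v := id) hinj (by simpa using hdeg)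
  -- evaluate at x
  have heval := congrArg (Polynomial.eval x) hinterp
  rw [Lagrange.interpolate_apply, Polynomial.eval_finset_sum] at heval
  have hQx : Q.eval x = ∏ y ∈ Y, (x - y) := by simp [hQ, Polynomial.eval_prod]
  have hRx : R.eval x = ∏ x' ∈ X.erase x, (x - x') := by simp [hR, Polynomial.eval_prod]
  have hQx0 : Q.eval x ≠ 0 := by
    rw [hQx]
    exact Finset.prod_ne_zero_iff.mpr (fun y hy => sub_ne_zero.mpr (fun h => hxY (h ▸ hy)))
  have hQy : ∀ y ∈ Y, Q.eval y = 0 := by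
    intro y hy
    simp only [hQ, Polynomial.eval_prod]
    exact Finset.prod_eq_zero hy (by simp)
  -- key evaluated identity
  have hmain : Q.eval x - R.eval x
      = ∑ y ∈ Y, (-(R.eval y)) * ∏ y' ∈ Y.erase y, ((y - y')⁻¹ * (x - y')) := by
    rw [Polynomial.eval_sub] at heval
    rw [heval]
    refine Finset.sum_congr rfl fun y hy => ?_
    simp only [id, Polynomial.eval_mul, Polynomial.eval_C, Polynomial.eval_sub, hQy y hy,
      zero_sub]
    congr 1
    rw [Lagrange.basis, Polynomial.eval_prod]
    refine Finset.prod_congr rfl fun y' _ => ?_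
    simp [Lagrange.basisDivisor]
  -- final algebra
  rw [← hRx, ← hQx]
  have hgoal : ∀ y ∈ Y,
      ((∏ x' ∈ X, (y - x')) / (∏ y' ∈ Y.erase y, (y - y'))) / (x - y) ^ 2
        = (-(R.eval y) * ∏ y' ∈ Y.erase y, ((y - y')⁻¹ * (x - y'))) / Q.eval x := by
    intro y hy
    have hRy : R.eval y = ∏ x' ∈ X.erase x, (y - x') := by
      simp [hR, Polynomial.eval_prod]
    have h1 : (y - x) * R.eval y = ∏ x' ∈ X, (y - x') := by
      rw [hRy]; exact Finset.mul_prod_erase X _ hx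
    have h2 : (x - y) * ∏ y' ∈ Y.erase y, (x - y') = Q.eval x := by
      rw [hQx]; exact Finset.mul_prod_erase Y _ hy
    have h3 : x - y ≠ 0 := sub_ne_zero.mpr fun h => hxY (h ▸ hy)
    have h4 : (∏ y' ∈ Y.erase y, (y - y')) ≠ 0 :=
      Finset.prod_ne_zero_iff.mpr fun y' hy' =>
        sub_ne_zero.mpr fun h => (Finset.mem_erase.mp hy').1 h.symm
    have h5 : (∏ y' ∈ Y.erase y, (x - y')) ≠ 0 :=
      Finset.prod_ne_zero_iff.mpr fun y' hy' =>
        sub_ne_zero.mpr fun h => hxY (h ▸ (Finset.mem_erase.mp hy').2)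
    rw [Finset.prod_mul_distrib, Finset.prod_inv_distrib, ← h1, ← h2]
    field_simp
    ring
  calc ∑ y ∈ Y, ((∏ x' ∈ X, (y - x')) / (∏ y' ∈ Y.erase y, (y - y'))) / (x - y) ^ 2
      = ∑ y ∈ Y, (-(R.eval y) * ∏ y' ∈ Y.erase y, ((y - y')⁻¹ * (x - y'))) / Q.eval x :=
        Finset.sum_congr rfl hgoal
    _ = (∑ y ∈ Y, (-(R.eval y)) * ∏ y' ∈ Y.erase y, ((y - y')⁻¹ * (x - y'))) / Q.eval x := by
        rw [Finset.sum_div]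
    _ = (Q.eval x - R.eval x) / Q.eval x := by rw [← hmain]
    _ = 1 - R.eval x / Q.eval x := by rw [sub_div, div_self hQx0]

end Aux

namespace YG

-- basic bounds
lemma rowLen_le_card (l : YoungDiagram) (i : ℕ) : l.rowLen i ≤ l.card := by
  rw [YoungDiagram.rowLen_eq_card]
  exact Finset.card_filter_le _ _

lemma colLen_le_card (l : YoungDiagram) (j : ℕ) : l.colLen j ≤ l.card := by
  rw [YoungDiagram.colLen_eq_card]
  exact Finset.card_filter_le _ _

/-- descent rows -/
def DD (l : YoungDiagram) : Finset ℕ :=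
  (Finset.range (l.card + 1)).filter (fun i => l.rowLen (i + 1) < l.rowLen i)

/-- addable rows -/
def AA (l : YoungDiagram) : Finset ℕ :=
  (Finset.range (l.card + 1)).filter (fun i => i = 0 ∨ l.rowLen i < l.rowLen (i - 1))

lemma mem_DD_le_card {l : YoungDiagram} {i : ℕ} (h : i ∈ DD l) : i + 1 ≤ l.card := by
  rw [DD, Finset.mem_filter] at h
  have h1 : 1 ≤ l.rowLen i := by omega
  have h2 : (i, 0) ∈ l := by rw [YoungDiagram.mem_iff_lt_rowLen]; omega
  rw [YoungDiagram.mem_iff_lt_colLen] at h2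
  have := colLen_le_card l 0
  omega

lemma removableCells_eq (l : YoungDiagram) :
    removableCells l = (DD l).image (fun i => (i, l.rowLen i - 1)) := by
  ext ⟨i, j⟩
  simp only [removableCells, Finset.mem_filter, YoungDiagram.mem_cells, Finset.mem_image,
    DD, Finset.mem_range, Prod.mk.injEq]
  constructor
  · rintro ⟨hmem, hright, hdown⟩
    rw [YoungDiagram.mem_iff_lt_rowLen] at hmem hright hdown
    refine ⟨i, ⟨?_, by omega⟩, rfl, by omega⟩
    have hm : (i, j) ∈ l := YoungDiagram.mem_iff_lt_rowLen.mpr hmem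
    have h1 := YoungDiagram.mem_iff_lt_colLen.mp hm
    have h2 := colLen_le_card l j
    omega
  · rintro ⟨i', ⟨hi'r, hdesc⟩, rfl, rfl⟩
    rw [YoungDiagram.mem_iff_lt_rowLen, YoungDiagram.mem_iff_lt_rowLen,
      YoungDiagram.mem_iff_lt_rowLen]
    omega

end YG

namespace YG

lemma addableCells_eq (l : YoungDiagram) :
    addableCells l = (AA l).image (fun i => (i, l.rowLen i)) := by
  ext ⟨i, j⟩
  simp only [addableCells, Finset.mem_filter, Finset.mem_product, Finset.mem_range,
    Finset.mem_image, AA, Prod.mk.injEq]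
  constructor
  · rintro ⟨⟨hi, hj⟩, hnm, hup, hleft⟩
    rw [YoungDiagram.mem_iff_lt_rowLen] at hnm
    have hjr : j = l.rowLen i := by
      rcases hleft with h0 | hl
      · subst h0; omega
      · rw [YoungDiagram.mem_iff_lt_rowLen] at hl; omega
    refine ⟨i, ⟨hi, ?_⟩, rfl, hjr.symm⟩
    rcases hup with h0 | hu
    · exact Or.inl h0
    · rw [YoungDiagram.mem_iff_lt_rowLen] at hu; omega
  · rintro ⟨i', ⟨hi'r, hcond⟩, rfl, rfl⟩
    have hnm : (i', l.rowLen i') ∉ l := by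
      rw [YoungDiagram.mem_iff_lt_rowLen]; omega
    refine ⟨⟨hi'r, ?_⟩, hnm, ?_, ?_⟩
    · have := rowLen_le_card l i'; omega
    · rcases hcond with h0 | hlt
      · exact Or.inl h0
      · exact Or.inr (by rw [YoungDiagram.mem_iff_lt_rowLen]; omega)
    · rcases Nat.eq_zero_or_pos (l.rowLen i') with h0 | hpos
      · exact Or.inl h0
      · exact Or.inr (by rw [YoungDiagram.mem_iff_lt_rowLen]; omega)

lemma AA_eq (l : YoungDiagram) : AA l = insert 0 ((DD l).image (· + 1)) := by
  ext i
  simp only [AA, DD, Finset.mem_filter, Finset.mem_range, Finset.mem_insert, Finset.mem_image]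
  constructor
  · rintro ⟨hi, h0 | hlt⟩
    · exact Or.inl h0
    · rcases Nat.eq_zero_or_pos i with rfl | hpos
      · exact Or.inl rfl
      · exact Or.inr ⟨i - 1, ⟨by omega, by rwa [Nat.sub_add_cancel hpos]⟩, by omega⟩
  · rintro (rfl | ⟨i', ⟨hi'r, hdesc⟩, rfl⟩)
    · exact ⟨by omega, Or.inl rfl⟩
    · have := mem_DD_le_card (l := l) (i := i')
        (by rw [DD, Finset.mem_filter, Finset.mem_range]; exact ⟨hi'r, hdesc⟩)
      exact ⟨by omega, Or.inr (by simpa using hdesc)⟩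

lemma card_AA (l : YoungDiagram) : (AA l).card = (DD l).card + 1 := by
  rw [AA_eq, Finset.card_insert_of_notMem (by simp), Finset.card_image_of_injective _
    (fun a b h => by omega)]

end YG

namespace YG

lemma rowLen_strict (l : YoungDiagram) {i i' : ℕ} (h : i < i') :
    (l.rowLen i' : ℤ) - i' < (l.rowLen i : ℤ) - i := by
  have := l.rowLen_anti i i' h.le
  omega

lemma content_rem {l : YoungDiagram} {i : ℕ} (h : i ∈ DD l) :
    content (i, l.rowLen i - 1) = (l.rowLen i : ℤ) - 1 - i := by
  rw [DD, Finset.mem_filter] at h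
  have : 1 ≤ l.rowLen i := by omega
  simp only [content]
  omega

lemma content_add (l : YoungDiagram) (i : ℕ) :
    content (i, l.rowLen i) = (l.rowLen i : ℤ) - i := by
  simp [content]

lemma content_inj_rem (l : YoungDiagram) :
    ∀ c ∈ removableCells l, ∀ c' ∈ removableCells l, content c = content c' → c = c' := by
  rw [removableCells_eq]
  intro c hc c' hc' hcc
  simp only [Finset.mem_image] at hc hc'
  obtain ⟨i, hi, rfl⟩ := hc
  obtain ⟨i', hi', rfl⟩ := hc'
  rw [content_rem hi, content_rem hi'] at hcc
  rcases lt_trichotomy i i' with h | rfl | h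
  · exact absurd hcc (by have := rowLen_strict l h; omega)
  · rfl
  · exact absurd hcc (by have := rowLen_strict l h; omega)

lemma content_inj_add (l : YoungDiagram) :
    ∀ c ∈ addableCells l, ∀ c' ∈ addableCells l, content c = content c' → c = c' := by
  rw [addableCells_eq]
  intro c hc c' hc' hcc
  simp only [Finset.mem_image] at hc hc'
  obtain ⟨i, hi, rfl⟩ := hc
  obtain ⟨i', hi', rfl⟩ := hc'
  rw [content_add, content_add] at hcc
  rcases lt_trichotomy i i' with h | rfl | h
  · exact absurd hcc (by have := rowLen_strict l h; omega)
  · rfl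
  · exact absurd hcc (by have := rowLen_strict l h; omega)

lemma content_disj (l : YoungDiagram) :
    ∀ c ∈ addableCells l, ∀ c' ∈ removableCells l, content c ≠ content c' := by
  rw [addableCells_eq, removableCells_eq]
  intro c hc c' hc' hcc
  simp only [Finset.mem_image] at hc hc'
  obtain ⟨i, hi, rfl⟩ := hc
  obtain ⟨i', hi', rfl⟩ := hc'
  rw [content_add, content_rem hi'] at hcc
  have hDD := hi'
  rw [DD, Finset.mem_filter] at hDD
  rcases le_or_gt i i' with h | h
  · have := l.rowLen_anti i i' h
    omega
  · have h1 : i' + 1 ≤ i := h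
    have := l.rowLen_anti (i' + 1) i h1
    omega

lemma card_removable (l : YoungDiagram) : (removableCells l).card = (DD l).card := by
  rw [removableCells_eq, Finset.card_image_of_injective _ (fun a b h => congrArg Prod.fst h)]

lemma card_addable (l : YoungDiagram) : (addableCells l).card = (DD l).card + 1 := by
  rw [addableCells_eq, Finset.card_image_of_injective _ (fun a b h => congrArg Prod.fst h),
    card_AA]

lemma covers_added (l μ : YoungDiagram) (h : Covers l μ) :
    ∃ c, μ.cells \ l.cells = {c} ∧ c ∈ addableCells l ∧ addedContent l μ = content c := by
  obtain ⟨hle, hcard⟩ := h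
  have e1 : μ.card = μ.cells.card := rfl
  have e2 : l.card = l.cells.card := rfl
  have hsub : l.cells ⊆ μ.cells := YoungDiagram.cells_subset_iff.mpr hle
  have hc1 : (μ.cells \ l.cells).card = 1 := by
    rw [Finset.card_sdiff_of_subset hsub]
    omega
  obtain ⟨c, hc⟩ := Finset.card_eq_one.mp hc1
  refine ⟨c, hc, ?_, by rw [addedContent, hc, Finset.sum_singleton]⟩
  obtain ⟨a, b⟩ := c
  have hmem : (a, b) ∈ μ.cells ∧ (a, b) ∉ l.cells := by
    have : (a, b) ∈ μ.cells \ l.cells := by rw [hc]; exact Finset.mem_singleton_self _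
    exact Finset.mem_sdiff.mp this
  have hmemμ : (a, b) ∈ μ := (YoungDiagram.mem_cells _).mp hmem.1
  have hother : ∀ p : ℕ × ℕ, p ∈ μ → p ≠ (a, b) → p ∈ l := by
    intro p hp hne
    by_contra hpl
    have : p ∈ μ.cells \ l.cells := Finset.mem_sdiff.mpr
      ⟨(YoungDiagram.mem_cells _).mpr hp, fun hh => hpl ((YoungDiagram.mem_cells _).mp hh)⟩
    rw [hc, Finset.mem_singleton] at this
    exact hne this
  rw [addableCells, Finset.mem_filter, Finset.mem_product, Finset.mem_range, Finset.mem_range]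
  have ha : a < μ.card := by
    have h1 := YoungDiagram.mem_iff_lt_colLen.mp hmemμ
    have h2 := colLen_le_card μ b
    omega
  have hb : b < μ.card := by
    have h1 := YoungDiagram.mem_iff_lt_rowLen.mp hmemμ
    have h2 := rowLen_le_card μ a
    omega
  refine ⟨⟨by omega, by omega⟩, fun hh => hmem.2 ((YoungDiagram.mem_cells _).mpr hh), ?_, ?_⟩
  · rcases Nat.eq_zero_or_pos a with rfl | hpos
    · exact Or.inl rfl
    · refine Or.inr (hother _ (μ.up_left_mem (by omega) le_rfl hmemμ) (by
        intro hh
        have := congrArg Prod.fst hh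
        simp at this
        omega))
  · rcases Nat.eq_zero_or_pos b with rfl | hpos
    · exact Or.inl rfl
    · refine Or.inr (hother _ (μ.up_left_mem le_rfl (by omega) hmemμ) (by
        intro hh
        have := congrArg Prod.snd hh
        simp at this
        omega))

end YG


namespace YG

lemma image_filter_ne (s : Finset (ℕ × ℕ)) (z : ℤ) :
    (s.filter (fun c => content c ≠ z)).image (fun c => ((content c : ℤ) : ℝ))
      = (s.image (fun c => ((content c : ℤ) : ℝ))).erase ((z : ℤ) : ℝ) := by
  ext t
  simp only [Finset.mem_image, Finset.mem_filter, Finset.mem_erase]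
  constructor
  · rintro ⟨c, ⟨hcs, hcz⟩, rfl⟩
    exact ⟨by exact_mod_cast hcz, c, hcs, rfl⟩
  · rintro ⟨htz, c, hcs, rfl⟩
    exact ⟨c, ⟨hcs, by exact_mod_cast htz⟩, rfl⟩

end YG

open YG Finset

/-- Second-order pole evaluation of the cotransition measure (Lemma 4.3):
for `λ ⋖ μ`, `|λ| · ∑_{ν : ν ⋖ λ} p↓(λ,ν)/(c(μ/λ) - c(λ/ν))² = 1/p↑(λ,μ) - 1`.
The sum over diagrams `ν` covered by `λ` is written as a sum over the removable
cells of `λ`. -/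
theorem stmt5 (l μ : YoungDiagram) (h : Covers l μ) :
    (l.card : ℝ) *
        ∑ r ∈ removableCells l,
          pDownAt l (content r) / (((addedContent l μ : ℝ) - (content r : ℝ)) ^ 2) =
      1 / pUp l μ - 1 := by
  classical
  obtain ⟨c, hsd, hcadd, hac⟩ := covers_added l μ h
  have hinjA : ∀ a ∈ addableCells l, ∀ a' ∈ addableCells l,
      ((content a : ℤ) : ℝ) = ((content a' : ℤ) : ℝ) → a = a' :=
    fun a ha a' ha' hh => content_inj_add l a ha a' ha' (by exact_mod_cast hh)
  have hinjR : ∀ a ∈ removableCells l, ∀ a' ∈ removableCells l,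
      ((content a : ℤ) : ℝ) = ((content a' : ℤ) : ℝ) → a = a' :=
    fun a ha a' ha' hh => content_inj_rem l a ha a' ha' (by exact_mod_cast hh)
  set Xr := (addableCells l).image (fun c => ((content c : ℤ) : ℝ)) with hXr
  set Yr := (removableCells l).image (fun c => ((content c : ℤ) : ℝ)) with hYr
  have hxX : ((addedContent l μ : ℤ) : ℝ) ∈ Xr :=
    Finset.mem_image.mpr ⟨c, hcadd, by rw [hac]⟩
  have hxY : ((addedContent l μ : ℤ) : ℝ) ∉ Yr := by
    intro hmem
    obtain ⟨r0, hr0, heq⟩ := Finset.mem_image.mp hmem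
    have hcc : content c = content r0 := by
      rw [hac] at heq
      exact_mod_cast heq.symm
    exact content_disj l c hcadd r0 hr0 hcc
  have hXcard : Xr.card = Yr.card + 1 := by
    rw [hXr, hYr, Finset.card_image_of_injOn (fun a ha b hb hh => hinjA a ha b hb hh),
      Finset.card_image_of_injOn (fun a ha b hb hh => hinjR a ha b hb hh),
      card_addable, card_removable]
  have hkey := key Xr Yr ((addedContent l μ : ℤ) : ℝ) hxX hXcard hxY
  -- convert the sum in hkey to a sum over removable cells
  have hterm : ∀ r ∈ removableCells l,
      ((∏ x' ∈ Xr, (((content r : ℤ) : ℝ) - x')) /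
          (∏ y' ∈ Yr.erase ((content r : ℤ) : ℝ), (((content r : ℤ) : ℝ) - y'))) /
        (((addedContent l μ : ℤ) : ℝ) - ((content r : ℤ) : ℝ)) ^ 2
      = ((∏ a ∈ addableCells l, (((content r : ℤ) : ℝ) - ((content a : ℤ) : ℝ))) /
          (∏ r' ∈ (removableCells l).filter (fun r' => content r' ≠ content r),
            (((content r : ℤ) : ℝ) - ((content r' : ℤ) : ℝ)))) /
        (((addedContent l μ : ℤ) : ℝ) - ((content r : ℤ) : ℝ)) ^ 2 := by
    intro r hr
    congr 2
    · rw [hXr, Finset.prod_image hinjA]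
    · rw [hYr, ← image_filter_ne,
        Finset.prod_image (fun a ha b hb hh =>
          hinjR a (Finset.filter_subset _ _ ha) b (Finset.filter_subset _ _ hb) hh)]
  have hXerase : ∏ x' ∈ Xr.erase ((addedContent l μ : ℤ) : ℝ),
      (((addedContent l μ : ℤ) : ℝ) - x')
      = ∏ a ∈ (addableCells l).filter (fun a => content a ≠ addedContent l μ),
          (((addedContent l μ : ℤ) : ℝ) - ((content a : ℤ) : ℝ)) := by
    rw [hXr, ← image_filter_ne,
      Finset.prod_image (fun a ha b hb hh =>
        hinjA a (Finset.filter_subset _ _ ha) b (Finset.filter_subset _ _ hb) hh)]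
  have hYprod : ∏ y ∈ Yr, (((addedContent l μ : ℤ) : ℝ) - y)
      = ∏ r ∈ removableCells l,
          (((addedContent l μ : ℤ) : ℝ) - ((content r : ℤ) : ℝ)) := by
    rw [hYr, Finset.prod_image hinjR]
  rw [hYr, Finset.sum_image hinjR, ← hYr, Finset.sum_congr rfl hterm, hXerase, hYr,
    Finset.prod_image hinjR] at hkey
  -- identify 1 / pUp
  have hpup : (1 : ℝ) / pUp l μ
      = (∏ a ∈ (addableCells l).filter (fun a => content a ≠ addedContent l μ),
          (((addedContent l μ : ℤ) : ℝ) - ((content a : ℤ) : ℝ))) /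
        (∏ r ∈ removableCells l,
          (((addedContent l μ : ℤ) : ℝ) - ((content r : ℤ) : ℝ))) := by
    rw [pUp, pUpAt, one_div_div]
  have hdown : ∀ r ∈ removableCells l,
      pDownAt l (content r) /
          (((addedContent l μ : ℝ)) - ((content r : ℝ))) ^ 2
      = -(1 / (l.card : ℝ)) *
          (((∏ a ∈ addableCells l, (((content r : ℤ) : ℝ) - ((content a : ℤ) : ℝ))) /
            (∏ r' ∈ (removableCells l).filter (fun r' => content r' ≠ content r),
              (((content r : ℤ) : ℝ) - ((content r' : ℤ) : ℝ)))) /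
          (((addedContent l μ : ℤ) : ℝ) - ((content r : ℤ) : ℝ)) ^ 2) := by
    intro r hr
    rw [pDownAt, mul_div_assoc]
  rw [Finset.sum_congr rfl hdown, ← Finset.mul_sum]
  rcases Nat.eq_zero_or_pos l.card with h0 | hpos
  · have hcells : l.cells = ∅ := Finset.card_eq_zero.mp h0
    have hrem : removableCells l = ∅ := by
      rw [removableCells, hcells, Finset.filter_empty]
    rw [hrem] at hkey hpup ⊢
    simp only [Finset.sum_empty, Finset.prod_empty, div_one, mul_zero, neg_zero,
      zero_mul] at hkey hpup ⊢
    linarith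
  · have hn : (l.card : ℝ) ≠ 0 := Nat.cast_ne_zero.mpr (by omega)
    have hcancel : (l.card : ℝ) * (-(1 / (l.card : ℝ)) *
        ∑ r ∈ removableCells l,
          ((∏ a ∈ addableCells l, (((content r : ℤ) : ℝ) - ((content a : ℤ) : ℝ))) /
            (∏ r' ∈ (removableCells l).filter (fun r' => content r' ≠ content r),
              (((content r : ℤ) : ℝ) - ((content r' : ℤ) : ℝ)))) /
          (((addedContent l μ : ℤ) : ℝ) - ((content r : ℤ) : ℝ)) ^ 2)
        = -(∑ r ∈ removableCells l,
          ((∏ a ∈ addableCells l, (((content r : ℤ) : ℝ) - ((content a : ℤ) : ℝ))) /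
            (∏ r' ∈ (removableCells l).filter (fun r' => content r' ≠ content r),
              (((content r : ℤ) : ℝ) - ((content r' : ℤ) : ℝ)))) /
          (((addedContent l μ : ℤ) : ℝ) - ((content r : ℤ) : ℝ)) ^ 2) := by
      field_simp
    rw [hcancel, hpup]
    linarith
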